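/- arXiv:2204.08736 — 4 statements merged into one kernel-verified Lean document; each statement's English description precedes it below -/
import Mathlib

section
/- For the dynamics dm_1/dt = −u(t)m_1, dm_2/dt = u(t)m_1 − ρ(t)m_2, dm_3/dt = ρ(t)m_2 on [0,1] with m(0) = (1,0,0), measurable control u(t) ∈ [0,1], and ρ(t) = 1 for t < 1/3, ρ(t) = −3t+2 for 1/3 ≤ t < 2/3, ρ(t) = 0 for t ≥ 2/3: if m_3(1) = 0, then u(t) = 0 for almost every t in [0, 2/3]. -/
open MeasureTheory Set

/-- The transition rate ρ of the counterexample. -/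
noncomputable def rho (t : ℝ) : ℝ := if t < 1/3 then 1 else if t < 2/3 then -3*t + 2 else 0

lemma rho_nonneg (t : ℝ) : 0 ≤ rho t := by
  unfold rho; split_ifs with h1 h2
  · norm_num
  · linarith
  · exact le_rfl

lemma rho_le_one (t : ℝ) : rho t ≤ 1 := by
  unfold rho; split_ifs with h1 h2
  · exact le_rfl
  · push_neg at h1; linarith
  · norm_num

lemma rho_pos {t : ℝ} (ht : t < 2/3) : 0 < rho t := by
  unfold rho
  split_ifs with h1
  · norm_num
  · linarith

lemma rho_measurable : Measurable rho := by
  unfold rho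
  refine Measurable.ite (measurableSet_lt measurable_id measurable_const) measurable_const ?_
  refine Measurable.ite (measurableSet_lt measurable_id measurable_const) ?_ measurable_const
  exact (measurable_const.mul measurable_id).add measurable_const

/-- First-crossing argument: if `f = f 0 + ∫ g`, `f 0 ≥ 0` and `g ≥ 0` wherever `f < 0`,
then `f ≥ 0` on `[0,1]`. -/
lemma cross (f g : ℝ → ℝ) (hf : ContinuousOn f (Icc 0 1))
    (hint : ∀ a b : ℝ, a ∈ Icc (0:ℝ) 1 → b ∈ Icc (0:ℝ) 1 → IntervalIntegrable g volume a b)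
    (heq : ∀ t ∈ Icc (0:ℝ) 1, f t = f 0 + ∫ s in (0:ℝ)..t, g s)
    (h0 : 0 ≤ f 0)
    (hg : ∀ s ∈ Icc (0:ℝ) 1, f s < 0 → 0 ≤ g s) :
    ∀ t ∈ Icc (0:ℝ) 1, 0 ≤ f t := by
  by_contra hcon
  push_neg at hcon
  obtain ⟨t1, ht1, hft1⟩ := hcon
  have hz1 : (0:ℝ) ∈ Icc (0:ℝ) 1 := by norm_num
  set S : Set ℝ := Icc 0 t1 ∩ f ⁻¹' Ici 0 with hSdef
  have hScl : IsClosed S :=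
    ContinuousOn.preimage_isClosed_of_isClosed
      (hf.mono (Icc_subset_Icc_right ht1.2)) isClosed_Icc isClosed_Ici
  have hScomp : IsCompact S :=
    (isCompact_Icc (a := (0:ℝ)) (b := t1)).of_isClosed_subset hScl inter_subset_left
  have h0S : (0:ℝ) ∈ S := ⟨⟨le_refl 0, ht1.1⟩, h0⟩
  set t0 := sSup S with ht0def
  have ht0S : t0 ∈ S := hScomp.sSup_mem ⟨0, h0S⟩
  have ht0le : t0 ≤ t1 := ht0S.1.2
  have ht0mem : t0 ∈ Icc (0:ℝ) 1 := ⟨ht0S.1.1, ht0le.trans ht1.2⟩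
  have hneg : ∀ s ∈ Ioc t0 t1, f s < 0 := by
    intro s hs
    by_contra h
    push_neg at h
    have hsS : s ∈ S := ⟨⟨ht0S.1.1.trans hs.1.le, hs.2⟩, h⟩
    exact absurd (le_csSup hScomp.bddAbove hsS) (not_le.mpr hs.1)
  have hadj := intervalIntegral.integral_add_adjacent_intervals
    (hint 0 t0 hz1 ht0mem) (hint t0 t1 ht0mem ht1)
  have hkey : f t1 = f t0 + ∫ s in t0..t1, g s := by
    rw [heq t1 ht1, heq t0 ht0mem, ← hadj]; ring
  have hnn : 0 ≤ ∫ s in t0..t1, g s := by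
    rw [intervalIntegral.integral_of_le ht0le]
    refine setIntegral_nonneg measurableSet_Ioc fun s hs => ?_
    exact hg s ⟨ht0mem.1.trans hs.1.le, hs.2.trans ht1.2⟩ (hneg s hs)
  have : (0:ℝ) ≤ f t0 := ht0S.2
  linarith

theorem stmt3 (u m1 m2 m3 : ℝ → ℝ)
    (humeas : Measurable u) (hurange : ∀ t, u t ∈ Icc (0:ℝ) 1)
    (hc1 : ContinuousOn m1 (Icc (0:ℝ) 1)) (hc2 : ContinuousOn m2 (Icc (0:ℝ) 1))
    (hc3 : ContinuousOn m3 (Icc (0:ℝ) 1))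
    (hm1 : ∀ t ∈ Icc (0:ℝ) 1, m1 t = 1 + ∫ s in (0:ℝ)..t, -(u s * m1 s))
    (hm2 : ∀ t ∈ Icc (0:ℝ) 1, m2 t = ∫ s in (0:ℝ)..t, (u s * m1 s - rho s * m2 s))
    (hm3 : ∀ t ∈ Icc (0:ℝ) 1, m3 t = ∫ s in (0:ℝ)..t, rho s * m2 s)
    (hfin : m3 1 = 0) :
    ∀ᵐ t ∂(volume.restrict (Icc (0:ℝ) (2/3))), u t = 0 := by
  have hIccfin : (volume (Icc (0:ℝ) 1)) < ⊤ := by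
    rw [Real.volume_Icc]; exact ENNReal.ofReal_lt_top
  obtain ⟨C1, hC1⟩ := (isCompact_Icc (a := (0:ℝ)) (b := 1)).exists_bound_of_continuousOn hc1
  obtain ⟨C2, hC2⟩ := (isCompact_Icc (a := (0:ℝ)) (b := 1)).exists_bound_of_continuousOn hc2
  have huabs : ∀ s, ‖u s‖ ≤ 1 := by
    intro s
    rw [Real.norm_eq_abs, abs_le]
    exact ⟨by linarith [(hurange s).1], (hurange s).2⟩
  -- integrability of u * m1 on [0,1]
  have hintu : IntegrableOn (fun s => u s * m1 s) (Icc (0:ℝ) 1) volume := by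
    refine ⟨(humeas.aemeasurable.mul (hc1.aemeasurable measurableSet_Icc)).aestronglyMeasurable,
      HasFiniteIntegral.restrict_of_bounded (C := C1) hIccfin ?_⟩
    refine ae_restrict_of_forall_mem measurableSet_Icc fun s hs => ?_
    calc ‖u s * m1 s‖ = ‖u s‖ * ‖m1 s‖ := norm_mul _ _
      _ ≤ 1 * C1 := mul_le_mul (huabs s) (hC1 s hs) (norm_nonneg _) zero_le_one
      _ = C1 := one_mul _
  have hintr : IntegrableOn (fun s => rho s * m2 s) (Icc (0:ℝ) 1) volume := by
    refine ⟨((rho_measurable.aemeasurable.mono_measure Measure.restrict_le_self).mul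
      (hc2.aemeasurable measurableSet_Icc)).aestronglyMeasurable,
      HasFiniteIntegral.restrict_of_bounded (C := C2) hIccfin ?_⟩
    refine ae_restrict_of_forall_mem measurableSet_Icc fun s hs => ?_
    have hrabs : ‖rho s‖ ≤ 1 := by
      rw [Real.norm_eq_abs, abs_le]
      exact ⟨by linarith [rho_nonneg s], rho_le_one s⟩
    calc ‖rho s * m2 s‖ = ‖rho s‖ * ‖m2 s‖ := norm_mul _ _
      _ ≤ 1 * C2 := mul_le_mul hrabs (hC2 s hs) (norm_nonneg _) zero_le_one
      _ = C2 := one_mul _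
  have hII1 : ∀ a b : ℝ, a ∈ Icc (0:ℝ) 1 → b ∈ Icc (0:ℝ) 1 →
      IntervalIntegrable (fun s => u s * m1 s) volume a b :=
    fun a b ha hb => (hintu.mono_set (uIcc_subset_Icc ha hb)).intervalIntegrable
  have hIIr : ∀ a b : ℝ, a ∈ Icc (0:ℝ) 1 → b ∈ Icc (0:ℝ) 1 →
      IntervalIntegrable (fun s => rho s * m2 s) volume a b :=
    fun a b ha hb => (hintr.mono_set (uIcc_subset_Icc ha hb)).intervalIntegrable
  have hz1 : (0:ℝ) ∈ Icc (0:ℝ) 1 := by norm_num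
  have h1mem : (1:ℝ) ∈ Icc (0:ℝ) 1 := by norm_num
  -- m1 ≥ 0 on [0,1]
  have h10 : m1 0 = 1 := by simpa using hm1 0 hz1
  have hm1nonneg : ∀ t ∈ Icc (0:ℝ) 1, 0 ≤ m1 t := by
    refine cross m1 (fun s => -(u s * m1 s)) hc1
      (fun a b ha hb => (hII1 a b ha hb).neg) ?_ ?_ ?_
    · intro t ht; rw [hm1 t ht, h10]
    · rw [h10]; norm_num
    · intro s hs hneg
      have h1 := (hurange s).1
      have : u s * m1 s ≤ 0 := mul_nonpos_of_nonneg_of_nonpos h1 hneg.le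
      exact neg_nonneg.mpr this
  -- m2 ≥ 0 on [0,1]
  have h20 : m2 0 = 0 := by simpa using hm2 0 hz1
  have hm2nonneg : ∀ t ∈ Icc (0:ℝ) 1, 0 ≤ m2 t := by
    refine cross m2 (fun s => u s * m1 s - rho s * m2 s) hc2
      (fun a b ha hb => (hII1 a b ha hb).sub (hIIr a b ha hb)) ?_ ?_ ?_
    · intro t ht; rw [hm2 t ht, h20, zero_add]
    · rw [h20]
    · intro s hs hneg
      have h1 : 0 ≤ u s * m1 s := mul_nonneg (hurange s).1 (hm1nonneg s hs)
      have h2 : rho s * m2 s ≤ 0 := mul_nonpos_of_nonneg_of_nonpos (rho_nonneg s) hneg.le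
      show 0 ≤ u s * m1 s - rho s * m2 s
      linarith
  -- ρ m2 = 0 a.e. on (0,1]
  have hnnr : (0 : ℝ → ℝ) ≤ᵐ[volume.restrict (Ioc (0:ℝ) 1)] fun s => rho s * m2 s := by
    refine ae_restrict_of_forall_mem measurableSet_Ioc fun s hs => ?_
    exact mul_nonneg (rho_nonneg s) (hm2nonneg s ⟨hs.1.le, hs.2⟩)
  have hint31 : ∫ s in (0:ℝ)..1, rho s * m2 s = 0 := by rw [← hm3 1 h1mem]; exact hfin
  have haez : (fun s => rho s * m2 s) =ᵐ[volume.restrict (Ioc (0:ℝ) 1)] 0 :=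
    (intervalIntegral.integral_eq_zero_iff_of_le_of_nonneg_ae zero_le_one hnnr
      (hIIr 0 1 hz1 h1mem)).mp hint31
  -- key identity: m2 t = ∫₀ᵗ u m1 for t ∈ [0,2/3]
  have key : ∀ t ∈ Icc (0:ℝ) (2/3), m2 t = ∫ s in (0:ℝ)..t, u s * m1 s := by
    intro t ht
    have htI : t ∈ Icc (0:ℝ) 1 := ⟨ht.1, ht.2.trans (by norm_num)⟩
    have hz : ∫ s in (0:ℝ)..t, rho s * m2 s = 0 := by
      rw [intervalIntegral.integral_of_le ht.1]
      exact integral_eq_zero_of_ae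
        (ae_restrict_of_ae_restrict_of_subset (Ioc_subset_Ioc_right htI.2) haez)
    rw [hm2 t htI, intervalIntegral.integral_sub (hII1 0 t hz1 htI) (hIIr 0 t hz1 htI),
      hz, sub_zero]
  -- m2 = 0 on [0, 2/3)
  have hm2zero : ∀ t ∈ Ico (0:ℝ) (2/3), m2 t = 0 := by
    intro t ht
    have hne : (volume.restrict (Ioo t (2/3)) : Measure ℝ) ≠ 0 := by
      intro h
      rw [Measure.restrict_eq_zero, Real.volume_Ioo, ENNReal.ofReal_eq_zero] at h
      linarith [ht.2]
    haveI : (ae (volume.restrict (Ioo t (2/3)))).NeBot := ae_neBot.mpr hne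
    have hsub : Ioo t (2/3) ⊆ Ioc (0:ℝ) 1 := fun x hx =>
      ⟨lt_of_le_of_lt ht.1 hx.1, hx.2.le.trans (by norm_num)⟩
    have hae' := (ae_restrict_of_ae_restrict_of_subset hsub haez).and
      (ae_restrict_mem (measurableSet_Ioo (a := t) (b := (2/3:ℝ))))
    obtain ⟨s, hs0, hsmem⟩ := hae'.exists
    have hms : m2 s = 0 := by
      simp only [Pi.zero_apply] at hs0
      exact (mul_eq_zero.mp hs0).resolve_left (ne_of_gt (rho_pos hsmem.2))
    have hsI : s ∈ Icc (0:ℝ) (2/3) := ⟨ht.1.trans hsmem.1.le, hsmem.2.le⟩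
    have htI23 : t ∈ Icc (0:ℝ) (2/3) := ⟨ht.1, ht.2.le⟩
    have htI : t ∈ Icc (0:ℝ) 1 := ⟨ht.1, ht.2.le.trans (by norm_num)⟩
    have hsI1 : s ∈ Icc (0:ℝ) 1 := ⟨hsI.1, hsI.2.trans (by norm_num)⟩
    have hadj := intervalIntegral.integral_add_adjacent_intervals
      (hII1 0 t hz1 htI) (hII1 t s htI hsI1)
    have hnn : 0 ≤ ∫ x in t..s, u x * m1 x := by
      rw [intervalIntegral.integral_of_le hsmem.1.le]
      refine setIntegral_nonneg measurableSet_Ioc fun x hx => ?_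
      exact mul_nonneg (hurange x).1 (hm1nonneg x ⟨htI.1.trans hx.1.le, hx.2.trans hsI1.2⟩)
    have hle : m2 t ≤ m2 s := by
      rw [key t htI23, key s hsI, ← hadj]; linarith
    have h2 := hm2nonneg t htI
    rw [hms] at hle
    linarith
  -- m2 (2/3) = 0 by continuity along a sequence
  have hm2_23 : m2 (2/3) = 0 := by
    have hseq : Filter.Tendsto (fun n : ℕ => (2/3 : ℝ) - 1/(n+2)) Filter.atTop (nhds (2/3)) := by
      have h1 : Filter.Tendsto (fun n : ℕ => 1/((n:ℝ)+2)) Filter.atTop (nhds 0) := by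
        have h0 := (tendsto_one_div_atTop_nhds_zero_nat (𝕜 := ℝ)).comp (Filter.tendsto_add_atTop_nat 2)
        have heqf : (fun n : ℕ => 1/((n:ℝ)+2)) = (fun n : ℕ => 1/(n:ℝ)) ∘ (fun n => n + 2) := by
          funext n; simp [Function.comp]
        rw [heqf]
        exact h0
      have := Filter.Tendsto.sub (tendsto_const_nhds (x := (2/3:ℝ)) (f := Filter.atTop)) h1
      simpa using this
    have hmemn : ∀ n : ℕ, (2/3 : ℝ) - 1/(n+2) ∈ Ico (0:ℝ) (2/3) := by
      intro n
      have hn0 : (0:ℝ) ≤ (n:ℝ) := Nat.cast_nonneg n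
      have h2n : (2:ℝ) ≤ (n:ℝ) + 2 := by linarith
      have hpos : (0:ℝ) < (n:ℝ) + 2 := by positivity
      have h1 : 1/((n:ℝ)+2) ≤ 1/2 := by
        apply div_le_div_of_nonneg_left (by norm_num) (by norm_num) h2n
      have h0 : 0 < 1/((n:ℝ)+2) := by positivity
      constructor <;> [linarith; linarith]
    have hmemI : ∀ n : ℕ, (2/3 : ℝ) - 1/(n+2) ∈ Icc (0:ℝ) 1 := fun n =>
      ⟨(hmemn n).1, (hmemn n).2.le.trans (by norm_num)⟩
    have h23 : (2/3:ℝ) ∈ Icc (0:ℝ) 1 := by norm_num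
    have hcw : ContinuousWithinAt m2 (Icc (0:ℝ) 1) (2/3) := hc2 _ h23
    have htend : Filter.Tendsto (fun n : ℕ => m2 ((2/3 : ℝ) - 1/(n+2))) Filter.atTop
        (nhds (m2 (2/3))) :=
      hcw.tendsto.comp (tendsto_nhdsWithin_of_tendsto_nhds_of_eventually_within _ hseq
        (Filter.Eventually.of_forall hmemI))
    have hconst : (fun n : ℕ => m2 ((2/3 : ℝ) - 1/(n+2))) = fun _ => (0:ℝ) :=
      funext fun n => hm2zero _ (hmemn n)
    rw [hconst] at htend
    exact tendsto_nhds_unique htend tendsto_const_nhds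
  -- conclude u m1 = 0 a.e. on (0, 2/3]
  have h23I : (2/3:ℝ) ∈ Icc (0:ℝ) 1 := by norm_num
  have h23I23 : (2/3:ℝ) ∈ Icc (0:ℝ) (2/3) := by norm_num
  have hint0 : ∫ s in (0:ℝ)..(2/3), u s * m1 s = 0 := by
    rw [← key (2/3) h23I23]; exact hm2_23
  have hnnu : (0 : ℝ → ℝ) ≤ᵐ[volume.restrict (Ioc (0:ℝ) (2/3))] fun s => u s * m1 s := by
    refine ae_restrict_of_forall_mem measurableSet_Ioc fun s hs => ?_
    exact mul_nonneg (hurange s).1 (hm1nonneg s ⟨hs.1.le, hs.2.trans (by norm_num)⟩)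
  have haeu : (fun s => u s * m1 s) =ᵐ[volume.restrict (Ioc (0:ℝ) (2/3))] 0 :=
    (intervalIntegral.integral_eq_zero_iff_of_le_of_nonneg_ae (by norm_num) hnnu
      (hII1 0 (2/3) hz1 h23I)).mp hint0
  -- m1 = 1 on [0, 2/3]
  have hm1one : ∀ t ∈ Icc (0:ℝ) (2/3), m1 t = 1 := by
    intro t ht
    have htI : t ∈ Icc (0:ℝ) 1 := ⟨ht.1, ht.2.trans (by norm_num)⟩
    have hz : ∫ s in (0:ℝ)..t, -(u s * m1 s) = 0 := by
      rw [intervalIntegral.integral_of_le ht.1]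
      apply integral_eq_zero_of_ae
      filter_upwards [ae_restrict_of_ae_restrict_of_subset (Ioc_subset_Ioc_right ht.2) haeu]
        with s hs
      simp only [Pi.zero_apply] at hs ⊢
      rw [hs, neg_zero]
    rw [hm1 t htI, hz, add_zero]
  -- finish
  rw [← Measure.restrict_congr_set (Ioc_ae_eq_Icc (a := (0:ℝ)) (b := (2/3:ℝ)))]
  filter_upwards [haeu, ae_restrict_mem measurableSet_Ioc] with t h1 h2
  simp only [Pi.zero_apply] at h1
  rw [hm1one t ⟨h2.1.le, h2.2⟩, mul_one] at h1
  exact h1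
end

section
/- The planning problem of the counterexample has no solution: there is no measurable control u* : [0,1] → [0,1] which simultaneously (a) is the unique control steering m(0) = (1,0,0) to m(1) = (1−e^{−1/3}, e^{−1/3}, 0) (namely u*(t) = 0 on [0,2/3), u*(t) = 1 on [2/3,1]) and (b) equals min(max(φ_2(t) − φ_1(t), 0), 1) for continuous functions φ_1, φ_2 solving the Bellman ODE system. Indeed, any control of the form (b) is continuous while the control in (a) is discontinuous at t = 2/3, so no solution exists. -/
open MeasureTheory Set

theorem stmt6 :
    ¬ ∃ u : ℝ → ℝ, Measurable u ∧ (∀ t, u t ∈ Icc (0:ℝ) 1) ∧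
      (∀ t ∈ Ico (0:ℝ) (2/3), u t = 0) ∧ (∀ t ∈ Icc (2/3:ℝ) 1, u t = 1) ∧
      ∃ φ1 φ2 φ3 : ℝ → ℝ,
        Continuous φ1 ∧ Continuous φ2 ∧ Continuous φ3 ∧
        (∀ t ∈ Icc (0:ℝ) 1,
          HasDerivAt φ1 (-(⨆ w : Icc (0:ℝ) 1, ((w:ℝ) * (φ2 t - φ1 t) - (w:ℝ)^2/2))) t) ∧
        (∀ t ∈ Icc (0:ℝ) 1, HasDerivAt φ2 (-(rho t * (φ3 t - φ2 t))) t) ∧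
        (∀ t ∈ Icc (0:ℝ) 1, HasDerivAt φ3 0 t) ∧
        (∀ t ∈ Icc (0:ℝ) 1, u t = min (max (φ2 t - φ1 t) 0) 1) := by
  rintro ⟨u, -, -, h0, h1, φ1, φ2, φ3, hc1, hc2, -, -, -, -, hu⟩
  -- the continuous candidate control
  set g : ℝ → ℝ := fun t => min (max (φ2 t - φ1 t) 0) 1 with hg
  have hgc : Continuous g := ((hc2.sub hc1).max continuous_const).min continuous_const
  -- sequence approaching 2/3 from the left
  set s : ℕ → ℝ := fun n => 2/3 - 1/(n+3) with hs
  have hmem : ∀ n, s n ∈ Icc (0:ℝ) 1 := by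
    intro n
    have hn : (0:ℝ) ≤ (n:ℝ) := Nat.cast_nonneg n
    have h3 : (3:ℝ) ≤ (n:ℝ) + 3 := by linarith
    have hpos : (0:ℝ) < (n:ℝ) + 3 := by positivity
    have hle : 1/((n:ℝ)+3) ≤ 1/3 := by
      apply div_le_div_of_nonneg_left (by norm_num) (by norm_num) h3
    have hgt : 0 < 1/((n:ℝ)+3) := by positivity
    constructor <;> simp only [hs] <;> nlinarith
  have hlt : ∀ n, s n < 2/3 := by
    intro n
    have : (0:ℝ) < 1/((n:ℝ)+3) := by positivity
    simp only [hs]; linarith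
  have htend : Filter.Tendsto s Filter.atTop (nhds (2/3)) := by
    have : Filter.Tendsto (fun n : ℕ => 1/((n:ℝ)+3)) Filter.atTop (nhds 0) := by
      apply Filter.Tendsto.div_atTop tendsto_const_nhds
      exact Filter.tendsto_atTop_add_const_right _ 3 tendsto_natCast_atTop_atTop
    simpa [hs, one_div] using this.const_sub (2/3)
  -- g(s n) = 0 for all n
  have hg0 : ∀ n, g (s n) = 0 := by
    intro n
    rw [show g (s n) = u (s n) from (hu _ (hmem n)).symm]
    exact h0 _ ⟨(hmem n).1, hlt n⟩
  -- g(2/3) = 1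
  have hg1 : g (2/3) = 1 := by
    rw [show g (2/3) = u (2/3) from (hu (2/3) (by norm_num)).symm]
    exact h1 _ ⟨le_refl _, by norm_num⟩
  have : Filter.Tendsto (fun n => g (s n)) Filter.atTop (nhds (g (2/3))) :=
    (hgc.continuousAt.tendsto).comp htend
  simp only [hg0, hg1] at this
  have := tendsto_nhds_unique this tendsto_const_nhds
  norm_num at this
end

section
/- Suppose μ : [0,T] → ℝ^d and φ : [0,T] → ℝ^d are absolutely continuous with dμ/dt = μ(t)Q(t), dφ/dt = −H(t) where Q(t) is a Kolmogorov matrix and H(t) is a vector satisfying componentwise Q(t)φ(t) + g(t) ≤ H(t) for a given integrable g : [0,T] → ℝ^d. If μ(0)φ(0) − μ(T)φ(T) − ∫_0^T μ(t)g(t) dt = 0 and μ_i(t) > 0 for all i, t, then Q(t)φ(t) + g(t) = H(t) for almost every t ∈ [0,T]. -/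
open MeasureTheory Set

theorem stmt8 (d : ℕ) (T : ℝ) (hT : 0 < T)
    (Q : ℝ → Matrix (Fin d) (Fin d) ℝ) (μ φ g H : ℝ → Fin d → ℝ)
    (hQoff : ∀ t, ∀ i j, i ≠ j → 0 ≤ Q t i j)
    (hQrow : ∀ t, ∀ i, ∑ j, Q t i j = 0)
    (hμode : ∀ t ∈ Icc (0:ℝ) T, ∀ i, HasDerivAt (fun s => μ s i) (∑ j, μ t j * Q t j i) t)
    (hφode : ∀ t ∈ Icc (0:ℝ) T, ∀ i, HasDerivAt (fun s => φ s i) (-(H t i)) t)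
    (hineq : ∀ t ∈ Icc (0:ℝ) T, ∀ i, (∑ j, Q t i j * φ t j) + g t i ≤ H t i)
    (hpos : ∀ t ∈ Icc (0:ℝ) T, ∀ i, 0 < μ t i)
    (hgint : IntervalIntegrable (fun t => ∑ i, μ t i * g t i) volume 0 T)
    (hzero : (∑ i, μ 0 i * φ 0 i) - (∑ i, μ T i * φ T i)
      - (∫ t in (0:ℝ)..T, ∑ i, μ t i * g t i) = 0) :
    ∀ᵐ t ∂(volume.restrict (Icc (0:ℝ) T)),
      ∀ i, (∑ j, Q t i j * φ t j) + g t i = H t i := by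
  set F : ℝ → ℝ := fun s => ∑ i, μ s i * φ s i with hF
  set G : ℝ → ℝ := fun s => ∑ i, μ s i * g s i with hG
  set A : ℝ → ℝ := fun t =>
    ∑ i, ((∑ j, μ t j * Q t j i) * φ t i + μ t i * (-(H t i))) with hA
  set M : ℝ → ℝ := fun t =>
    ∑ i, μ t i * (H t i - (∑ j, Q t i j * φ t j) - g t i) with hM
  -- derivative of F
  have hFderiv : ∀ t ∈ Icc (0:ℝ) T, HasDerivAt F (A t) t := by
    intro t ht
    exact HasDerivAt.fun_sum fun i _ => (hμode t ht i).mul (hφode t ht i)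
  -- algebraic identity
  have hAM : ∀ t, A t = -(M t) - G t := by
    intro t
    have h1 : ∑ i, (∑ j, μ t j * Q t j i) * φ t i
        = ∑ i, μ t i * (∑ j, Q t i j * φ t j) := by
      simp only [Finset.sum_mul, Finset.mul_sum]
      rw [Finset.sum_comm]
      exact Finset.sum_congr rfl fun j _ => Finset.sum_congr rfl fun i _ => by ring
    simp only [hA, hM, hG, mul_sub, mul_neg, Finset.sum_add_distrib,
      Finset.sum_sub_distrib, h1, Finset.sum_neg_distrib]
    ring
  -- M is nonnegative on Icc
  have hMnonneg : ∀ t ∈ Icc (0:ℝ) T, 0 ≤ M t := by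
    intro t ht
    apply Finset.sum_nonneg
    intro i _
    have := hineq t ht i
    have := (hpos t ht i).le
    nlinarith [hineq t ht i, (hpos t ht i).le]
  -- the truncated function
  set B : ℝ → ℝ := fun t => min (max (-(deriv F t) - G t) 0) 1 with hB
  have hB01 : ∀ t, 0 ≤ B t ∧ B t ≤ 1 := fun t =>
    ⟨le_min (le_max_right _ _) zero_le_one, min_le_right _ _⟩
  -- B equals min (M t) 1 on Ioo
  have hBeq : ∀ t ∈ Ioo (0:ℝ) T, B t = min (M t) 1 := by
    intro t ht
    have ht' : t ∈ Icc (0:ℝ) T := Ioo_subset_Icc_self ht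
    have hd : deriv F t = A t := (hFderiv t ht').deriv
    have : -(deriv F t) - G t = M t := by rw [hd, hAM]; ring
    rw [hB]
    simp only [this, max_eq_left (hMnonneg t ht')]
  -- measurability and integrability of B
  have hGmeas : AEStronglyMeasurable G (volume.restrict (Ioc (0:ℝ) T)) :=
    hgint.1.aestronglyMeasurable
  have hrIoc : volume.restrict (Ioc (0:ℝ) T) = volume.restrict (Icc (0:ℝ) T) :=
    Measure.restrict_congr_set Ioc_ae_eq_Icc
  have hGmeas' : AEStronglyMeasurable G (volume.restrict (Icc (0:ℝ) T)) := by
    rwa [hrIoc] at hGmeas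
  have hBmeas : AEStronglyMeasurable B (volume.restrict (Icc (0:ℝ) T)) := by
    apply AEMeasurable.aestronglyMeasurable
    apply AEMeasurable.min _ aemeasurable_const
    apply AEMeasurable.max _ aemeasurable_const
    exact ((measurable_deriv F).aemeasurable.neg.sub hGmeas'.aemeasurable)
  have hBint : IntegrableOn B (Icc (0:ℝ) T) := by
    apply Integrable.mono' (integrableOn_const (lt_top_iff_ne_top.1 ?_) (by simp) : IntegrableOn (fun _ => (1:ℝ)) _ _) hBmeas
    · filter_upwards with t
      have := hB01 t
      rw [Real.norm_eq_abs, abs_of_nonneg this.1]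
      exact this.2
    · exact measure_Icc_lt_top
  have hGint : IntegrableOn G (Icc (0:ℝ) T) := by
    rw [integrableOn_Icc_iff_integrableOn_Ioc]
    exact hgint.1
  -- apply FTC inequality
  have hbound : F T - F 0 ≤ ∫ y in (0:ℝ)..T, (-(B y) - G y) := by
    apply intervalIntegral.sub_le_integral_of_hasDeriv_right_of_le hT.le
    · intro t ht
      exact ((hFderiv t ht).continuousAt).continuousWithinAt
    · intro t ht
      exact (hFderiv t (Ioo_subset_Icc_self ht)).hasDerivWithinAt
    · exact (hBint.neg.sub hGint)
    · intro t ht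
      have ht' : t ∈ Icc (0:ℝ) T := Ioo_subset_Icc_self ht
      rw [hAM t, hBeq t ht]
      have : min (M t) 1 ≤ M t := min_le_left _ _
      linarith
  have hBintI : IntervalIntegrable B volume 0 T := by
    rw [intervalIntegrable_iff_integrableOn_Ioc_of_le hT.le]
    exact hBint.mono_set Ioc_subset_Icc_self
  have hnegB : IntervalIntegrable (fun y => -(B y)) volume 0 T := hBintI.neg
  have hsplit : (∫ y in (0:ℝ)..T, (-(B y) - G y))
      = -(∫ y in (0:ℝ)..T, B y) - ∫ y in (0:ℝ)..T, G y := by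
    rw [intervalIntegral.integral_sub hnegB hgint, intervalIntegral.integral_neg]
  have hIB : (∫ y in (0:ℝ)..T, B y) ≤ 0 := by
    have hz : F 0 - F T = ∫ y in (0:ℝ)..T, G y := by
      simpa [hF, hG, sub_eq_zero] using hzero
    rw [hsplit] at hbound
    linarith
  -- the integral of B over Ioc is zero, hence B = 0 a.e.
  have hIB' : ∫ y in Ioc (0:ℝ) T, B y = 0 := by
    have hge : 0 ≤ ∫ y in Ioc (0:ℝ) T, B y :=
      setIntegral_nonneg measurableSet_Ioc fun t _ => (hB01 t).1
    rw [intervalIntegral.integral_of_le hT.le] at hIB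
    linarith
  have hBae : ∀ᵐ t ∂(volume.restrict (Ioc (0:ℝ) T)), B t = 0 := by
    have hint : Integrable B (volume.restrict (Ioc (0:ℝ) T)) :=
      hBint.mono_set Ioc_subset_Icc_self
    have := (integral_eq_zero_iff_of_nonneg_ae
      (Filter.Eventually.of_forall fun t => (hB01 t).1) hint).1 hIB'
    filter_upwards [this.le] with t ht
    exact le_antisymm ht (hB01 t).1
  -- transfer to restrict Icc, using that Ioo has full measure in Icc
  have hrIoo : volume.restrict (Ioo (0:ℝ) T) = volume.restrict (Icc (0:ℝ) T) :=
    Measure.restrict_congr_set Ioo_ae_eq_Icc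
  rw [← hrIoo]
  have hBae' : ∀ᵐ t ∂(volume.restrict (Ioo (0:ℝ) T)), B t = 0 :=
    hBae.filter_mono (ae_mono (Measure.restrict_mono Ioo_subset_Ioc_self le_rfl))
  filter_upwards [hBae', ae_restrict_mem measurableSet_Ioo] with t hBt htIoo
  have ht' : t ∈ Icc (0:ℝ) T := Ioo_subset_Icc_self htIoo
  have hMt : M t = 0 := by
    have h1 : min (M t) 1 = 0 := by rw [← hBeq t htIoo]; exact hBt
    rcases min_eq_iff.1 h1 with h | h
    · exact h.1
    · linarith [h.1]
  have hterm : ∀ i ∈ Finset.univ,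
      μ t i * (H t i - (∑ j, Q t i j * φ t j) - g t i) = 0 := by
    have hnn : ∀ i ∈ Finset.univ,
        0 ≤ μ t i * (H t i - (∑ j, Q t i j * φ t j) - g t i) := fun i _ => by
      nlinarith [hineq t ht' i, (hpos t ht' i).le]
    exact (Finset.sum_eq_zero_iff_of_nonneg hnn).1 hMt
  intro i
  have := hterm i (Finset.mem_univ i)
  have hμ := (hpos t ht' i).ne'
  have : H t i - (∑ j, Q t i j * φ t j) - g t i = 0 := by
    rcases mul_eq_zero.1 this with h | h
    · exact absurd h hμ
    · exact h
  linarith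
end

section
/- With μ, φ, Q, g, H as above (dμ/dt = μQ, dφ/dt = −H, Q(t)φ(t) + g(t) ≤ H(t) componentwise, μ(t) ≥ 0 componentwise), the regret J = μ(0)φ(0) − μ(T)φ(T) − ∫_0^T μ(t)g(t) dt is always nonnegative. -/
open MeasureTheory Set

theorem stmt9 (d : ℕ) (T : ℝ) (hT : 0 < T)
    (Q : ℝ → Matrix (Fin d) (Fin d) ℝ) (μ φ g H : ℝ → Fin d → ℝ)
    (hQoff : ∀ t, ∀ i j, i ≠ j → 0 ≤ Q t i j)
    (hQrow : ∀ t, ∀ i, ∑ j, Q t i j = 0)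
    (hμode : ∀ t ∈ Icc (0:ℝ) T, ∀ i, HasDerivAt (fun s => μ s i) (∑ j, μ t j * Q t j i) t)
    (hφode : ∀ t ∈ Icc (0:ℝ) T, ∀ i, HasDerivAt (fun s => φ s i) (-(H t i)) t)
    (hineq : ∀ t ∈ Icc (0:ℝ) T, ∀ i, (∑ j, Q t i j * φ t j) + g t i ≤ H t i)
    (hnonneg : ∀ t ∈ Icc (0:ℝ) T, ∀ i, 0 ≤ μ t i)
    (hgint : IntervalIntegrable (fun t => ∑ i, μ t i * g t i) volume 0 T) :
    0 ≤ (∑ i, μ 0 i * φ 0 i) - (∑ i, μ T i * φ T i)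
      - ∫ t in (0:ℝ)..T, ∑ i, μ t i * g t i := by
  set F : ℝ → ℝ := fun t => ∑ i, μ t i * φ t i with hF
  set F' : ℝ → ℝ := fun t =>
    ∑ i, ((∑ j, μ t j * Q t j i) * φ t i + μ t i * (-(H t i))) with hF'
  have hderiv : ∀ t ∈ Icc (0:ℝ) T, HasDerivAt F (F' t) t := by
    intro t ht
    exact HasDerivAt.fun_sum fun i _ => (hμode t ht i).mul (hφode t ht i)
  have hbound : ∀ t ∈ Icc (0:ℝ) T, F' t ≤ -∑ i, μ t i * g t i := by
    intro t ht
    have h1 : ∑ i, (∑ j, μ t j * Q t j i) * φ t i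
        = ∑ j, μ t j * (∑ i, Q t j i * φ t i) := by
      simp only [Finset.sum_mul, Finset.mul_sum]
      rw [Finset.sum_comm]
      congr 1; funext i; congr 1; funext j; ring
    have h2 : ∀ j, μ t j * (∑ i, Q t j i * φ t i) ≤ μ t j * (H t j - g t j) := by
      intro j
      exact mul_le_mul_of_nonneg_left (by linarith [hineq t ht j]) (hnonneg t ht j)
    calc F' t = (∑ j, μ t j * (∑ i, Q t j i * φ t i)) - ∑ i, μ t i * H t i := by
          simp only [hF', Finset.sum_add_distrib, h1]
          rw [sub_eq_add_neg, ← Finset.sum_neg_distrib]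
          exact congrArg _ (Finset.sum_congr rfl fun i _ => by ring)
      _ ≤ (∑ j, μ t j * (H t j - g t j)) - ∑ i, μ t i * H t i := by
          exact sub_le_sub_right (Finset.sum_le_sum fun j _ => h2 j) _
      _ = -∑ i, μ t i * g t i := by
          rw [← Finset.sum_neg_distrib, ← Finset.sum_sub_distrib]
          congr 1; funext i; ring
  have hcont : ContinuousOn F (Icc 0 T) := fun t ht =>
    (hderiv t ht).continuousAt.continuousWithinAt
  have hint : IntegrableOn (fun t => -∑ i, μ t i * g t i) (Icc 0 T) :=
    ((intervalIntegrable_iff_integrableOn_Icc_of_le hT.le).1 hgint).neg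
  have key : F T - F 0 ≤ ∫ t in (0:ℝ)..T, -∑ i, μ t i * g t i := by
    apply intervalIntegral.sub_le_integral_of_hasDeriv_right_of_le hT.le hcont
      (fun x hx => ((hderiv x (Ioo_subset_Icc_self hx)).hasDerivWithinAt)) hint
    intro x hx
    exact hbound x (Ioo_subset_Icc_self hx)
  rw [intervalIntegral.integral_neg] at key
  simp only [hF] at key
  linarith
end
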